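/- Let S²(ℂ^n) be the space of n×n complex symmetric matrices and let β_s : S²(ℂ^n) × ℂ^n → ℂ^n, (A, v) ↦ Av, be the symmetric matrix-vector product with structure tensor μ_s. Then rank(μ_s) = n(n+1)/2. -/

import Mathlib

open Filter Topology

/-- `HasTensorRankLE 𝕜 β r` means that the bilinear operation `β` admits a decomposition
into `r` rank-one terms, i.e., the structure tensor `μ_β ∈ U* ⊗ V* ⊗ W` of `β` can be
written as `∑ i, f i ⊗ g i ⊗ w i` with `r` summands; equivalently `rank (μ_β) ≤ r`. -/
def HasTensorRankLE (𝕜 : Type*) [Field 𝕜] {U V W : Type*}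
    [AddCommGroup U] [Module 𝕜 U] [AddCommGroup V] [Module 𝕜 V]
    [AddCommGroup W] [Module 𝕜 W] (β : U → V → W) (r : ℕ) : Prop :=
  ∃ (f : Fin r → (U →ₗ[𝕜] 𝕜)) (g : Fin r → (V →ₗ[𝕜] 𝕜)) (w : Fin r → W),
    ∀ u v, β u v = ∑ i, (f i u * g i v) • w i

/-- The rank of the structure tensor `μ_β` of a bilinear operation `β`. -/
noncomputable def tensorRank (𝕜 : Type*) [Field 𝕜] {U V W : Type*}
    [AddCommGroup U] [Module 𝕜 U] [AddCommGroup V] [Module 𝕜 V]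
    [AddCommGroup W] [Module 𝕜 W] (β : U → V → W) : ℕ :=
  sInf {r | HasTensorRankLE 𝕜 β r}

/-- The border rank of the structure tensor `μ_β` of a bilinear operation `β` : the least `r`
such that `μ_β` is a limit of a sequence of tensors of rank at most `r` (convergence of the
tensors in the finite-dimensional space `U* ⊗ V* ⊗ W` being equivalent to pointwise
convergence of the corresponding bilinear maps). -/
noncomputable def borderRank (𝕜 : Type*) [Field 𝕜] {U V W : Type*}
    [AddCommGroup U] [Module 𝕜 U] [AddCommGroup V] [Module 𝕜 V]
    [AddCommGroup W] [Module 𝕜 W] [TopologicalSpace W] (β : U → V → W) : ℕ :=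
  sInf {r | ∃ s : ℕ → (U → V → W), (∀ m, HasTensorRankLE 𝕜 (s m) r) ∧
    ∀ u v, Tendsto (fun m => s m u v) atTop (𝓝 (β u v))}

/-- The space `S²(ℂ^n)` of `n × n` complex symmetric matrices. -/
noncomputable def symmetricMatrixSpace (n : ℕ) : Submodule ℂ (Matrix (Fin n) (Fin n) ℂ) where
  carrier := {A | A.IsSymm}
  add_mem' hA hB := hA.add hB
  zero_mem' := Matrix.isSymm_zero
  smul_mem' c _ hA := hA.smul c

/-!
For `i < j` the rank-one term `A i j (v i + v j) (e i + e j)` produces the two off-diagonal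
contributions `A i j (v j e i + v i e j)` of `A v`, plus the spurious diagonal part
`A i j (v i e i + v j e j)`; the `n` diagonal terms `(A i i - ∑_{j ≠ i} A i j) v i e i` absorb all of
it. This gives `n + (n choose 2) = n(n+1)/2` terms. Conversely `A ↦ (v ↦ A v)` is injective on
`S²(ℂ^n)`, so the first-factor functionals of any decomposition separate the points of `S²(ℂ^n)`,
and there must be at least `dim S²(ℂ^n) = n(n+1)/2` of them.
-/

open Finset
open scoped Matrix

section TensorRank

variable {𝕜 : Type*} [Field 𝕜] {U V W : Type*} [AddCommGroup U] [Module 𝕜 U]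
  [AddCommGroup V] [Module 𝕜 V] [AddCommGroup W] [Module 𝕜 W] {β : U → V → W}

theorem HasTensorRankLE.of_fintype {ι : Type*} [Fintype ι] (f : ι → U →ₗ[𝕜] 𝕜)
    (g : ι → V →ₗ[𝕜] 𝕜) (w : ι → W) (h : ∀ u v, β u v = ∑ i, (f i u * g i v) • w i) :
    HasTensorRankLE 𝕜 β (Fintype.card ι) := by
  let e := (Fintype.equivFin ι).symm
  exact ⟨f ∘ e, g ∘ e, w ∘ e, fun u v => (h u v).trans (e.sum_comp _).symm⟩

theorem HasTensorRankLE.finrank_le [FiniteDimensional 𝕜 U]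
    (hβ : ∀ u, (∀ v, β u v = 0) → u = 0) {r : ℕ} (h : HasTensorRankLE 𝕜 β r) :
    Module.finrank 𝕜 U ≤ r := by
  obtain ⟨f, g, w, hfgw⟩ := h
  have hinj : Function.Injective (LinearMap.pi f) := by
    refine (injective_iff_map_eq_zero _).2 fun u hu => hβ u fun v => ?_
    simp [hfgw, show ∀ i, f i u = 0 from fun i => congrFun hu i]
  simpa using LinearMap.finrank_le_finrank_of_injective hinj

end TensorRank

theorem Finset.sum_filter_fst_lt_snd {α M : Type*} [Fintype α] [LinearOrder α]
    [LocallyFiniteOrderTop α] [AddCommMonoid M] (F : α → α → M) :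
    ∑ x ∈ univ.filter (fun x : α × α => x.1 < x.2), F x.1 x.2 = ∑ i, ∑ j ∈ Ioi i, F i j := by
  simp [Finset.sum_filter, Fintype.sum_prod_type, ← Finset.filter_lt_eq_Ioi]

theorem Matrix.IsSymm.mulVec_eq_sum {R ι : Type*} [CommRing R] [Fintype ι]
    [LinearOrder ι] [LocallyFiniteOrderTop ι] [LocallyFiniteOrderBot ι]
    {A : Matrix ι ι R} (hA : A.IsSymm) (v : ι → R) :
    A *ᵥ v = ∑ i, ((A i i - ∑ j ∈ {i}ᶜ, A i j) * v i) • Pi.single i 1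
      + ∑ i, ∑ j ∈ Ioi i, (A i j * (v i + v j)) • (Pi.single i 1 + Pi.single j 1) := by
  have pairs : ∑ i, ∑ j ∈ Ioi i, (A i j * (v i + v j)) • (Pi.single i 1 + Pi.single j 1)
      = ∑ i, ∑ j ∈ {i}ᶜ, (A i j * (v i + v j)) • (Pi.single i 1 : ι → R) := by
    refine Eq.trans ?_
      (sum_sum_Ioi_add_eq_sum_sum_off_diag fun j i => (A i j * (v i + v j)) • Pi.single i 1)
    refine sum_congr rfl fun i _ => sum_congr rfl fun j _ => ?_
    rw [hA.apply i j, add_comm (v j), smul_add]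
  have row (i : ι) : (A i i - ∑ j ∈ {i}ᶜ, A i j) * v i + ∑ j ∈ {i}ᶜ, A i j * (v i + v j)
      = (A *ᵥ v) i := by
    simp only [Matrix.mulVec, dotProduct, ← add_sum_erase univ _ (mem_univ i), ← compl_singleton i]
    rw [sub_mul, sum_mul]
    simp only [mul_add, sum_add_distrib]
    ring
  calc A *ᵥ v = ∑ i, (A *ᵥ v) i • Pi.single i 1 := by
        simp_rw [← Pi.single_smul, smul_eq_mul, mul_one, univ_sum_single]
    _ = ∑ i, ((A i i - ∑ j ∈ {i}ᶜ, A i j) * v i) • Pi.single i 1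
          + ∑ i, ∑ j ∈ {i}ᶜ, (A i j * (v i + v j)) • (Pi.single i 1 : ι → R) := by
        simp only [← row, add_smul, sum_smul, sum_add_distrib]
    _ = _ := by rw [pairs]

theorem Nat.succ_choose_two (n : ℕ) : (n + 1).choose 2 = n * (n + 1) / 2 := by
  rw [Nat.choose_two_right, Nat.add_sub_cancel, mul_comm]

namespace symmetricMatrixSpace

variable (n : ℕ)

noncomputable def entry (i j : Fin n) : symmetricMatrixSpace n →ₗ[ℂ] ℂ :=
  (Matrix.entryLinearMap ℂ ℂ i j).comp (symmetricMatrixSpace n).subtype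

theorem hasTensorRankLE_mulVec : HasTensorRankLE ℂ
    (fun (A : symmetricMatrixSpace n) (v : Fin n → ℂ) =>
      (A : Matrix (Fin n) (Fin n) ℂ).mulVec v) (n * (n + 1) / 2) := by
  let ι := Fin n ⊕ univ.filter (fun x : Fin n × Fin n => x.1 < x.2)
  have hcard : Fintype.card ι = n * (n + 1) / 2 := by
    rw [Fintype.card_sum, Fintype.card_fin, Fintype.card_coe, Fintype.card_product_filter_lt,
      Fintype.card_fin, ← Nat.succ_choose_two, Nat.choose_succ_succ', Nat.choose_one_right]
  rw [← hcard]
  refine HasTensorRankLE.of_fintype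
    (Sum.elim (fun i => entry n i i - ∑ j ∈ {i}ᶜ, entry n i j) fun x => entry n x.1.1 x.1.2)
    (Sum.elim (fun i => LinearMap.proj (R := ℂ) i) fun x => .proj x.1.1 + .proj x.1.2)
    (Sum.elim (fun i => Pi.single i 1) fun x => Pi.single x.1.1 1 + Pi.single x.1.2 1)
    fun A v => ?_
  rw [A.2.mulVec_eq_sum, Fintype.sum_sum_type, ← sum_filter_fst_lt_snd,
    ← sum_coe_sort (univ.filter _)]
  simp [entry]

noncomputable def equivSym2 : symmetricMatrixSpace n ≃ₗ[ℂ] (Sym2 (Fin n) → ℂ) where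
  toFun A := Sym2.lift ⟨fun i j => A.1 i j, fun i j => (A.2.apply i j).symm⟩
  map_add' A B := by ext z; induction z using Sym2.ind; rfl
  map_smul' c A := by ext z; induction z using Sym2.ind; rfl
  invFun c := ⟨Matrix.of fun i j => c s(i, j), by ext i j; simp [Sym2.eq_swap]⟩
  left_inv A := rfl
  right_inv c := by ext z; induction z using Sym2.ind; rfl

theorem finrank_eq : Module.finrank ℂ (symmetricMatrixSpace n) = n * (n + 1) / 2 := by
  rw [(equivSym2 n).finrank_eq, Module.finrank_fintype_fun_eq_card, Sym2.card, Fintype.card_fin,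
    Nat.succ_choose_two]

end symmetricMatrixSpace

/-- The structure tensor `μ_s` of the symmetric matrix-vector product
`S²(ℂ^n) × ℂ^n → ℂ^n`, `(A, v) ↦ Av`, has rank `n(n+1)/2`. -/
theorem tensorRank_symmetric_mulVec (n : ℕ) :
    tensorRank ℂ (fun (A : symmetricMatrixSpace n) (v : Fin n → ℂ) =>
        (A : Matrix (Fin n) (Fin n) ℂ).mulVec v) = n * (n + 1) / 2 := by
  refine IsLeast.csInf_eq ⟨symmetricMatrixSpace.hasTensorRankLE_mulVec n, fun r hr => ?_⟩
  rw [← symmetricMatrixSpace.finrank_eq n]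
  exact hr.finrank_le fun A hA => Subtype.ext (Matrix.ext_iff_mulVec.2 fun v => by simpa using hA v)
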